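/- arXiv:1507.08751 — 3 statements merged into one kernel-verified Lean document; each statement's English description precedes it below -/
import Mathlib

section
/- For any matrix X of rank r with reduced SVD X = U S Vᵀ (U of size m×r, V of size n×r with orthonormal columns, S positive diagonal), the matrix U Vᵀ is a subgradient of the nuclear norm at X; that is, for every matrix Z, ‖Z‖_* ≥ ‖X‖_* + ⟨U Vᵀ, Z − X⟩, where ⟨·,·⟩ is the trace (Frobenius) inner product. -/
noncomputable section
open Matrix BigOperators

/-- Frobenius (trace) inner product of two real matrices. -/
def frobInner {m n : ℕ} (A B : Matrix (Fin m) (Fin n) ℝ) : ℝ := (Aᵀ * B).trace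

/-- Singular values of a real matrix: square roots of the eigenvalues of `Xᴴ * X`. -/
def singularValues {m n : ℕ} (X : Matrix (Fin m) (Fin n) ℝ) : Fin n → ℝ :=
  fun i => Real.sqrt ((Matrix.isHermitian_conjTranspose_mul_self X).eigenvalues i)

/-- Nuclear norm: sum of singular values. -/
def nuclearNorm {m n : ℕ} (X : Matrix (Fin m) (Fin n) ℝ) : ℝ := ∑ i, singularValues X i

/-- Operator norm: largest singular value. -/
def opNorm {m n : ℕ} (X : Matrix (Fin m) (Fin n) ℝ) : ℝ := ⨆ i, singularValues X i

/-!
The nuclear norm is dual to the spectral norm: `⟨P, Z⟩ ≤ ‖Z‖_*` for every contraction `P`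
(expand the trace in an orthonormal eigenbasis of `ZᵀZ` and apply Cauchy–Schwarz column by
column), with equality for the polar factor of `Z`. Since `U Vᵀ` is a contraction,
`⟨U Vᵀ, Z⟩ ≤ ‖Z‖_*`; and if `P` is the polar factor of `X`, then
`‖X‖_* = ⟨P, U S Vᵀ⟩ ≤ tr S = ⟨U Vᵀ, X⟩`. Subtracting the two gives the subgradient inequality.
-/

namespace Matrix

variable {ι κ ν : Type*}

theorem transpose_apply_dotProduct_transpose_apply [Fintype κ] (A : Matrix κ ι ℝ)
    (B : Matrix κ ν ℝ) (i : ι) (j : ν) : Aᵀ i ⬝ᵥ Bᵀ j = (Aᵀ * B) i j :=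
  rfl

theorem transpose_apply_dotProduct_self_eq_one [Fintype κ] [DecidableEq ι] {A : Matrix κ ι ℝ}
    (hA : Aᵀ * A = 1) (j : ι) : Aᵀ j ⬝ᵥ Aᵀ j = 1 := by
  rw [transpose_apply_dotProduct_transpose_apply, hA, one_apply_eq]

variable [Fintype ι] [Fintype κ]

theorem dotProduct_le_sqrt_mul_sqrt (v w : ι → ℝ) : v ⬝ᵥ w ≤ √(v ⬝ᵥ v) * √(w ⬝ᵥ w) := by
  simpa [dotProduct, sq] using Real.sum_mul_le_sqrt_mul_sqrt Finset.univ v w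

theorem mulVec_dotProduct_eq_dotProduct_transpose_mulVec (A : Matrix κ ι ℝ) (v : ι → ℝ)
    (w : κ → ℝ) : A *ᵥ v ⬝ᵥ w = v ⬝ᵥ Aᵀ *ᵥ w := by
  rw [dotProduct_comm, dotProduct_mulVec, ← mulVec_transpose, dotProduct_comm]

theorem mulVec_dotProduct_mulVec (A : Matrix κ ι ℝ) (v w : ι → ℝ) :
    A *ᵥ v ⬝ᵥ A *ᵥ w = v ⬝ᵥ (Aᵀ * A) *ᵥ w := by
  rw [mulVec_dotProduct_eq_dotProduct_transpose_mulVec, mulVec_mulVec]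

/-- Spectral norm at most `1`. -/
def IsContraction (P : Matrix κ ι ℝ) : Prop :=
  ∀ v : ι → ℝ, P *ᵥ v ⬝ᵥ P *ᵥ v ≤ v ⬝ᵥ v

theorem isContraction_of_transpose_mul_self_eq_diagonal [DecidableEq ι] {P : Matrix κ ι ℝ}
    {d : ι → ℝ} (hP : Pᵀ * P = diagonal d) (hd : ∀ i, d i ≤ 1) : IsContraction P := by
  intro v
  rw [mulVec_dotProduct_mulVec, hP]
  refine Finset.sum_le_sum fun i _ => ?_
  rw [mulVec_diagonal]
  nlinarith [mul_self_nonneg (v i), hd i]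

theorem isContraction_of_transpose_mul_self_eq_one [DecidableEq ι] {P : Matrix κ ι ℝ}
    (hP : Pᵀ * P = 1) : IsContraction P :=
  isContraction_of_transpose_mul_self_eq_diagonal (hP.trans diagonal_one.symm) fun _ => le_rfl

namespace IsContraction

variable [Fintype ν] {P : Matrix κ ι ℝ}

theorem mul {Q : Matrix ν κ ℝ} (hQ : IsContraction Q) (hP : IsContraction P) :
    IsContraction (Q * P) := fun v => by
  rw [← mulVec_mulVec]
  exact (hQ _).trans (hP v)

theorem mulVec_dotProduct_le (hP : IsContraction P) {v : ι → ℝ} (hv : v ⬝ᵥ v ≤ 1) (w : κ → ℝ) :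
    P *ᵥ v ⬝ᵥ w ≤ √(w ⬝ᵥ w) :=
  calc P *ᵥ v ⬝ᵥ w ≤ √(P *ᵥ v ⬝ᵥ P *ᵥ v) * √(w ⬝ᵥ w) := dotProduct_le_sqrt_mul_sqrt _ _
    _ ≤ 1 * √(w ⬝ᵥ w) := by gcongr; exact Real.sqrt_le_one.mpr ((hP v).trans hv)
    _ = √(w ⬝ᵥ w) := one_mul _

theorem transpose (hP : IsContraction P) : IsContraction Pᵀ := by
  intro w
  set y := Pᵀ *ᵥ w
  have hy : y ⬝ᵥ y ≤ √(y ⬝ᵥ y) * √(w ⬝ᵥ w) :=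
    calc y ⬝ᵥ y = P *ᵥ y ⬝ᵥ w := (mulVec_dotProduct_eq_dotProduct_transpose_mulVec P y w).symm
      _ ≤ √(P *ᵥ y ⬝ᵥ P *ᵥ y) * √(w ⬝ᵥ w) := dotProduct_le_sqrt_mul_sqrt _ _
      _ ≤ √(y ⬝ᵥ y) * √(w ⬝ᵥ w) := by gcongr; exact hP y
  have hy' := Real.sq_sqrt (by simpa using dotProduct_star_self_nonneg y)
  have hw' := Real.sq_sqrt (by simpa using dotProduct_star_self_nonneg w)
  nlinarith [Real.sqrt_nonneg (y ⬝ᵥ y), Real.sqrt_nonneg (w ⬝ᵥ w)]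

end IsContraction

theorem IsHermitian.exists_orthogonal_transpose_mul_mul_eq_diagonal [DecidableEq ι]
    {A : Matrix ι ι ℝ} (hA : A.IsHermitian) :
    ∃ W : Matrix ι ι ℝ, Wᵀ * W = 1 ∧ W * Wᵀ = 1 ∧ Wᵀ * A * W = diagonal hA.eigenvalues := by
  have hstar : star (hA.eigenvectorUnitary : Matrix ι ι ℝ) =
      (hA.eigenvectorUnitary : Matrix ι ι ℝ)ᵀ :=
    conjTranspose_eq_transpose_of_trivial _
  have hmem := Unitary.mem_iff.mp hA.eigenvectorUnitary.2
  refine ⟨hA.eigenvectorUnitary, hstar ▸ hmem.1, hstar ▸ hmem.2, ?_⟩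
  have h := hA.conjStarAlgAut_star_eigenvectorUnitary
  rw [Unitary.conjStarAlgAut_star_apply, hstar] at h
  simpa using h

end Matrix

section FrobeniusInner

variable {m n r : ℕ}

theorem frobInner_sub_right (G Z X : Matrix (Fin m) (Fin n) ℝ) :
    frobInner G (Z - X) = frobInner G Z - frobInner G X := by
  rw [frobInner, frobInner, frobInner, Matrix.mul_sub, trace_sub]

theorem frobInner_eq_sum_dotProduct (A B : Matrix (Fin m) (Fin n) ℝ) :
    frobInner A B = ∑ j, Aᵀ j ⬝ᵥ Bᵀ j :=
  rfl

theorem frobInner_mul_mul_of_mul_transpose_eq_one {W : Matrix (Fin n) (Fin r) ℝ}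
    (hW : W * Wᵀ = 1) (A B : Matrix (Fin m) (Fin n) ℝ) :
    frobInner (A * W) (B * W) = frobInner A B := by
  rw [frobInner, frobInner, transpose_mul, Matrix.mul_assoc, trace_mul_comm, Matrix.mul_assoc,
    Matrix.mul_assoc, hW, Matrix.mul_one]

theorem frobInner_mul_transpose_mul_mul_transpose {U : Matrix (Fin m) (Fin r) ℝ}
    {V : Matrix (Fin n) (Fin r) ℝ} (hU : Uᵀ * U = 1) (hV : Vᵀ * V = 1)
    (S : Matrix (Fin r) (Fin r) ℝ) :
    frobInner (U * Vᵀ) (U * S * Vᵀ) = S.trace := by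
  have h : (U * Vᵀ)ᵀ * (U * S * Vᵀ) = V * (S * Vᵀ) := by
    rw [transpose_mul, transpose_transpose]
    simp only [Matrix.mul_assoc]
    rw [← Matrix.mul_assoc Uᵀ U, hU, Matrix.one_mul]
  rw [frobInner, h, trace_mul_comm, Matrix.mul_assoc, hV, Matrix.mul_one]

theorem frobInner_mul_diagonal_mul_transpose (P : Matrix (Fin m) (Fin n) ℝ)
    (U : Matrix (Fin m) (Fin r) ℝ) (d : Fin r → ℝ) (V : Matrix (Fin n) (Fin r) ℝ) :
    frobInner P (U * diagonal d * Vᵀ) = ∑ j, d j * (P *ᵥ Vᵀ j ⬝ᵥ Uᵀ j) := by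
  rw [frobInner, ← Matrix.mul_assoc, trace_mul_comm, ← Matrix.mul_assoc, ← Matrix.mul_assoc]
  refine Finset.sum_congr rfl fun j _ => ?_
  rw [diag_apply, mul_diagonal, mul_comm, ← transpose_mul]
  rfl

end FrobeniusInner

section NuclearNorm

variable {m n r : ℕ}

theorem frobInner_le_nuclearNorm_of_isContraction {G : Matrix (Fin m) (Fin n) ℝ}
    (hG : IsContraction G) (Z : Matrix (Fin m) (Fin n) ℝ) : frobInner G Z ≤ nuclearNorm Z := by
  obtain ⟨W, hWW, hWW', hZW⟩ :=
    (isHermitian_conjTranspose_mul_self Z).exists_orthogonal_transpose_mul_mul_eq_diagonal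
  rw [← frobInner_mul_mul_of_mul_transpose_eq_one hWW', frobInner_eq_sum_dotProduct]
  refine Finset.sum_le_sum fun i _ => ?_
  calc (G * W)ᵀ i ⬝ᵥ (Z * W)ᵀ i ≤ √((Z * W)ᵀ i ⬝ᵥ (Z * W)ᵀ i) :=
        hG.mulVec_dotProduct_le (transpose_apply_dotProduct_self_eq_one hWW i).le _
    _ = singularValues Z i := by
      rw [transpose_apply_dotProduct_transpose_apply, transpose_mul, ← Matrix.mul_assoc,
        ← conjTranspose_eq_transpose_of_trivial Z, Matrix.mul_assoc Wᵀ, hZW, diagonal_apply_eq]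
      rfl

theorem exists_isContraction_frobInner_eq_nuclearNorm (X : Matrix (Fin m) (Fin n) ℝ) :
    ∃ P : Matrix (Fin m) (Fin n) ℝ, IsContraction P ∧ frobInner P X = nuclearNorm X := by
  obtain ⟨W, hWW, hWW', hXW⟩ :=
    (isHermitian_conjTranspose_mul_self X).exists_orthogonal_transpose_mul_mul_eq_diagonal
  set σ := singularValues X
  have hgram : (X * W)ᵀ * (X * W) = diagonal fun i => σ i ^ 2 := by
    rw [transpose_mul, Matrix.mul_assoc, ← Matrix.mul_assoc Xᵀ,
      ← conjTranspose_eq_transpose_of_trivial X, ← Matrix.mul_assoc, hXW]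
    congr 1
    funext i
    exact (Real.sq_sqrt (eigenvalues_conjTranspose_mul_self_nonneg X i)).symm
  -- normalise the orthogonal columns of `X * W`; those with `σ i = 0` stay zero as `0⁻¹ = 0`
  set Q := X * W * diagonal fun i => (σ i)⁻¹
  have hQ : Qᵀ * Q = diagonal fun i => ((σ i)⁻¹ * σ i) ^ 2 := by
    rw [transpose_mul, diagonal_transpose, Matrix.mul_assoc, ← Matrix.mul_assoc (X * W)ᵀ, hgram,
      diagonal_mul_diagonal, diagonal_mul_diagonal]
    congr 1
    funext i
    ring
  have hQ_le : ∀ i, ((σ i)⁻¹ * σ i) ^ 2 ≤ 1 := fun i => by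
    rcases eq_or_ne (σ i) 0 with h | h <;> simp [h]
  refine ⟨Q * Wᵀ, (isContraction_of_transpose_mul_self_eq_diagonal hQ hQ_le).mul
    (isContraction_of_transpose_mul_self_eq_one (by rwa [transpose_transpose])), ?_⟩
  calc frobInner (Q * Wᵀ) X = frobInner Q (X * W) := by
        rw [← frobInner_mul_mul_of_mul_transpose_eq_one hWW', Matrix.mul_assoc, hWW,
          Matrix.mul_one]
    _ = ∑ i, (σ i)⁻¹ * σ i * σ i := by
        rw [frobInner, transpose_mul, diagonal_transpose, Matrix.mul_assoc, hgram,
          diagonal_mul_diagonal, trace_diagonal]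
        simp only [sq, mul_assoc]
    _ = nuclearNorm X := Finset.sum_congr rfl fun i _ => inv_mul_mul_self (σ i)

theorem frobInner_mul_diagonal_mul_transpose_le {P : Matrix (Fin m) (Fin n) ℝ}
    (hP : IsContraction P) {U : Matrix (Fin m) (Fin r) ℝ} {V : Matrix (Fin n) (Fin r) ℝ}
    (hU : Uᵀ * U = 1) (hV : Vᵀ * V = 1) {d : Fin r → ℝ} (hd : ∀ j, 0 ≤ d j) :
    frobInner P (U * diagonal d * Vᵀ) ≤ ∑ j, d j := by
  rw [frobInner_mul_diagonal_mul_transpose]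
  refine Finset.sum_le_sum fun j _ => ?_
  calc d j * (P *ᵥ Vᵀ j ⬝ᵥ Uᵀ j) ≤ d j * √(Uᵀ j ⬝ᵥ Uᵀ j) :=
        mul_le_mul_of_nonneg_left
          (hP.mulVec_dotProduct_le (transpose_apply_dotProduct_self_eq_one hV j).le _) (hd j)
    _ = d j := by rw [transpose_apply_dotProduct_self_eq_one hU, Real.sqrt_one, mul_one]

end NuclearNorm

theorem uv_mem_subdifferential_nuclearNorm_general
    {m n r : ℕ} (X : Matrix (Fin m) (Fin n) ℝ)
    (U : Matrix (Fin m) (Fin r) ℝ) (S : Matrix (Fin r) (Fin r) ℝ)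
    (V : Matrix (Fin n) (Fin r) ℝ)
    (hU : Uᵀ * U = 1) (hV : Vᵀ * V = 1)
    (hSdiag : ∀ i j : Fin r, i ≠ j → S i j = 0)
    (hSpos : ∀ i : Fin r, 0 < S i i)
    (hX : X = U * S * Vᵀ) :
    ∀ Z : Matrix (Fin m) (Fin n) ℝ,
      nuclearNorm Z ≥ nuclearNorm X + frobInner (U * Vᵀ) (Z - X) := by
  intro Z
  have hUV : IsContraction (U * Vᵀ) :=
    (isContraction_of_transpose_mul_self_eq_one hU).mul
      (isContraction_of_transpose_mul_self_eq_one hV).transpose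
  have hS : S = diagonal S.diag := (IsDiag.diagonal_diag hSdiag).symm
  obtain ⟨P, hP, hPX⟩ := exists_isContraction_frobInner_eq_nuclearNorm X
  have hX_le : nuclearNorm X ≤ S.trace := by
    rw [← hPX, hX, hS, trace_diagonal]
    exact frobInner_mul_diagonal_mul_transpose_le hP hU hV fun j => (hSpos j).le
  have hUVX : frobInner (U * Vᵀ) X = S.trace := by
    rw [hX, frobInner_mul_transpose_mul_mul_transpose hU hV]
  rw [ge_iff_le, frobInner_sub_right, hUVX]
  linarith [frobInner_le_nuclearNorm_of_isContraction hUV Z]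

/-- For any matrix `X` of rank `r` with reduced SVD `X = U S Vᵀ`
(`U`, `V` with orthonormal columns, `S` positive diagonal), the matrix `U Vᵀ` is a
subgradient of the nuclear norm at `X`. -/
theorem uv_mem_subdifferential_nuclearNorm
    {m n r : ℕ} (X : Matrix (Fin m) (Fin n) ℝ)
    (U : Matrix (Fin m) (Fin r) ℝ) (S : Matrix (Fin r) (Fin r) ℝ)
    (V : Matrix (Fin n) (Fin r) ℝ)
    (hrank : X.rank = r)
    (hU : Uᵀ * U = 1) (hV : Vᵀ * V = 1)
    (hSdiag : ∀ i j : Fin r, i ≠ j → S i j = 0)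
    (hSpos : ∀ i : Fin r, 0 < S i i)
    (hX : X = U * S * Vᵀ) :
    ∀ Z : Matrix (Fin m) (Fin n) ℝ,
      nuclearNorm Z ≥ nuclearNorm X + frobInner (U * Vᵀ) (Z - X) :=
  uv_mem_subdifferential_nuclearNorm_general X U S V hU hV hSdiag hSpos hX
end
end

section
/- Let T_1, …, T_L be linear subspaces of a finite-dimensional inner product space equipped with norms ‖·‖_{(i)}* (each a norm on the whole space). Define μ_{ij} = max{‖N‖_{(i)}* : N ∈ T_j, ‖N‖_{(j)}* ≤ 1} for i ≠ j. If there exist positive reals λ_1,…,λ_L with Σ_{j≠i} μ_{ij} λ_j / λ_i < 1 for every i, then the subspaces are independent: for every i, T_i ∩ Σ_{j≠i} T_j = {0}. -/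
noncomputable section
open BigOperators

/-!
Represent a vanishing sum `∑ j, g j = 0` with `g j ∈ T j`, and pick an index `i` maximising
the weighted size `ν j (g j) / λ j`. Writing `g i = -∑_{j ≠ i} g j` and bounding each term by
coherence gives `ν i (g i) ≤ (∑_{j ≠ i} μ i j λ j / λ i) · ν i (g i)`, so by the balance
condition the maximal weighted size, and with it every `g j`, vanishes.
-/

open Finset

theorem iSupIndep_of_forall_sum_eq_zero {ι R M : Type*} [Fintype ι] [Ring R] [AddCommGroup M]
    [Module R M] (p : ι → Submodule R M)
    (h : ∀ v : ι → M, (∀ i, v i ∈ p i) → ∑ i, v i = 0 → ∀ i, v i = 0) : iSupIndep p := by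
  classical
  refine (iSupIndep_iff_finsetSum_eq_zero_imp_eq_zero p).2 fun s v hv hsum i hi => ?_
  have key := h (fun j => if j ∈ s then v j else 0) (fun j => by split_ifs <;> simp [*])
    (by rw [sum_ite_mem, univ_inter, hsum]) i
  simpa [hi] using key

namespace Seminorm

variable {E : Type*} [AddCommGroup E] [Module ℝ E]

theorem le_sum_erase_of_sum_eq_zero {ι : Type*} [Fintype ι] [DecidableEq ι] (p : Seminorm ℝ E)
    {g : ι → E} (hg : ∑ j, g j = 0) (i : ι) : p (g i) ≤ ∑ j ∈ univ.erase i, p (g j) := by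
  have hgi : g i = -∑ j ∈ univ.erase i, g j :=
    eq_neg_of_add_eq_zero_left <| by rwa [add_sum_erase _ _ (mem_univ i)]
  rw [hgi, map_neg_eq_map]
  exact le_sum_of_subadditive p (map_zero p).le (map_add_le_add p) _ _

theorem le_mul_of_mem_upperBounds (p q : Seminorm ℝ E) {S : Submodule ℝ E}
    (hq : ∀ x ∈ S, q x = 0 → x = 0) {μ : ℝ} (hμ : μ ∈ upperBounds (p '' {x | x ∈ S ∧ q x ≤ 1}))
    {x : E} (hx : x ∈ S) : p x ≤ μ * q x := by
  rcases (apply_nonneg q x).eq_or_lt with hqx | hqx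
  · simp [hq x hx hqx.symm]
  · have hunit : (q x)⁻¹ • x ∈ {x | x ∈ S ∧ q x ≤ 1} := by
      refine ⟨S.smul_mem _ hx, ?_⟩
      rw [map_smul_eq_mul, Real.norm_of_nonneg (inv_nonneg.2 hqx.le), inv_mul_cancel₀ hqx.ne']
    have := hμ ⟨_, hunit, rfl⟩
    rw [map_smul_eq_mul, Real.norm_of_nonneg (inv_nonneg.2 hqx.le), inv_mul_le_iff₀ hqx] at this
    linarith

theorem eq_zero_of_sum_eq_zero_of_coherence {ι : Type*} [Fintype ι] [DecidableEq ι]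
    (p : ι → Seminorm ℝ E) (hp : ∀ i x, p i x = 0 → x = 0) (T : ι → Submodule ℝ E)
    (μ : ι → ι → ℝ) (hμ : ∀ i j, i ≠ j → 0 ≤ μ i j)
    (hcoh : ∀ i j, i ≠ j → ∀ x ∈ T j, p i x ≤ μ i j * p j x) (lam : ι → ℝ)
    (hlam : ∀ i, 0 < lam i) (hbal : ∀ i, ∑ j ∈ univ.erase i, μ i j * lam j < lam i)
    {g : ι → E} (hgT : ∀ j, g j ∈ T j) (hg : ∑ j, g j = 0) (k : ι) : g k = 0 := by
  set a : ι → ℝ := fun j => p j (g j) / lam j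
  obtain ⟨i, -, hi⟩ := exists_max_image univ a ⟨k, mem_univ k⟩
  have hp_le : ∀ j, p j (g j) ≤ lam j * a i := fun j => by
    rw [← div_le_iff₀' (hlam j)]; exact hi j (mem_univ j)
  have hself : lam i * a i ≤ (∑ j ∈ univ.erase i, μ i j * lam j) * a i := calc
    lam i * a i = p i (g i) := mul_div_cancel₀ _ (hlam i).ne'
    _ ≤ ∑ j ∈ univ.erase i, p i (g j) := le_sum_erase_of_sum_eq_zero (p i) hg i
    _ ≤ ∑ j ∈ univ.erase i, μ i j * (lam j * a i) := sum_le_sum fun j hj => by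
      have hij : i ≠ j := (ne_of_mem_erase hj).symm
      exact (hcoh i j hij _ (hgT j)).trans (mul_le_mul_of_nonneg_left (hp_le j) (hμ i j hij))
    _ = (∑ j ∈ univ.erase i, μ i j * lam j) * a i := by rw [sum_mul]; simp only [mul_assoc]
  have hai : a i ≤ 0 := by nlinarith [hbal i]
  exact hp k _ <| le_antisymm (by nlinarith [hp_le k, hlam k]) (apply_nonneg _ _)

end Seminorm

theorem subspaces_independent_of_incoherence_general
    {E : Type*} [NormedAddCommGroup E] [InnerProductSpace ℝ E]
    {L : ℕ} (T : Fin L → Submodule ℝ E) (ν : Fin L → E → ℝ)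
    (hν_add : ∀ i x y, ν i (x + y) ≤ ν i x + ν i y)
    (hν_smul : ∀ i (c : ℝ) x, ν i (c • x) = |c| * ν i x)
    (hν_def : ∀ i x, ν i x = 0 → x = 0)
    (μ : Fin L → Fin L → ℝ)
    (hμ_def : ∀ i j, i ≠ j → IsGreatest ((fun N => ν i N) '' {N : E | N ∈ T j ∧ ν j N ≤ 1}) (μ i j))
    (lam : Fin L → ℝ) (hlam : ∀ i, 0 < lam i)
    (hbal : ∀ i, ∑ j ∈ Finset.univ.erase i, μ i j * lam j / lam i < 1) :
    ∀ i, T i ⊓ (⨆ j ∈ Finset.univ.erase i, T j) = ⊥ := by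
  let p i : Seminorm ℝ E := .of (ν i) (hν_add i) (hν_smul i)
  have hμ_nonneg i j (hij : i ≠ j) : 0 ≤ μ i j := by
    obtain ⟨N, -, hN⟩ := (hμ_def i j hij).1
    exact hN ▸ apply_nonneg (p i) N
  have hcoh i j (hij : i ≠ j) : ∀ x ∈ T j, p i x ≤ μ i j * p j x :=
    fun _ => (p i).le_mul_of_mem_upperBounds (p j) (fun x _ => hν_def j x) (hμ_def i j hij).2
  have hbal' i : ∑ j ∈ univ.erase i, μ i j * lam j < lam i := by
    simpa [← sum_div, div_lt_one (hlam i)] using hbal i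
  have hindep : iSupIndep T := iSupIndep_of_forall_sum_eq_zero T fun _ hgT hg =>
    Seminorm.eq_zero_of_sum_eq_zero_of_coherence p hν_def T μ hμ_nonneg hcoh lam hlam hbal' hgT hg
  intro i
  simpa [iSupIndep_def, disjoint_iff, mem_erase] using hindep i

/-- Let `T 1, …, T L` be subspaces of a finite-dimensional inner
product space, each equipped with a norm `ν i` on the whole space, and let `μ i j`
be coherence parameters satisfying `ν i N ≤ μ i j * ν j N` for `N ∈ T j` (as given by
their definition as a maximum). If positive `λ i` exist with
`Σ_{j ≠ i} μ i j * λ j / λ i < 1` for all `i`, then the subspaces are independent. -/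
theorem subspaces_independent_of_incoherence
    {E : Type*} [NormedAddCommGroup E] [InnerProductSpace ℝ E] [FiniteDimensional ℝ E]
    {L : ℕ} (T : Fin L → Submodule ℝ E) (ν : Fin L → E → ℝ)
    (hν_nonneg : ∀ i x, 0 ≤ ν i x)
    (hν_add : ∀ i x y, ν i (x + y) ≤ ν i x + ν i y)
    (hν_smul : ∀ i (c : ℝ) x, ν i (c • x) = |c| * ν i x)
    (hν_def : ∀ i x, ν i x = 0 → x = 0)
    (μ : Fin L → Fin L → ℝ)
    (hμ_def : ∀ i j, i ≠ j → IsGreatest ((fun N => ν i N) '' {N : E | N ∈ T j ∧ ν j N ≤ 1}) (μ i j))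
    (lam : Fin L → ℝ) (hlam : ∀ i, 0 < lam i)
    (hbal : ∀ i, ∑ j ∈ Finset.univ.erase i, μ i j * lam j / lam i < 1) :
    ∀ i, T i ⊓ (⨆ j ∈ Finset.univ.erase i, T j) = ⊥ :=
  subspaces_independent_of_incoherence_general T ν hν_add hν_smul hν_def μ hμ_def lam hlam hbal
end
end

section
/- The proximal operator of λ‖·‖_* (nuclear norm) at a matrix X with SVD X = U Σ Vᵀ is the singular value soft-thresholding operator: argmin_Z ( (1/2)‖Z − X‖_F² + λ‖Z‖_* ) = U max(Σ − λ, 0) Vᵀ, where the max is applied entrywise to the diagonal of Σ. -/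
noncomputable section
open Matrix BigOperators

/-- Squared Frobenius norm. -/
def frobSq {m n : ℕ} (A : Matrix (Fin m) (Fin n) ℝ) : ℝ := ∑ i, ∑ j, (A i j) ^ 2

/-!
Put `D = max(Σ - λ, 0)` and `Zs = U D Vᵀ`. Then `X - Zs = U (Σ - D) Vᵀ` where `Σ - D = min(Σ, λ)`
is diagonal with entries in `[0, λ]`, so by trace duality `⟨Z, X - Zs⟩ ≤ λ‖Z‖_*` for every `Z`,
with equality at `Z = Zs` since `D (Σ - D) = λ D` entrywise. Thus `X - Zs` is a subgradient of
`λ‖·‖_*` at `Zs`, and expanding the square in `F(Z) = ½‖Z - X‖_F² + λ‖Z‖_*` gives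
`F(Z) ≥ F(Zs) + ½‖Z - Zs‖_F²`.

Trace duality is proved in an orthonormal eigenbasis `v_k` of `AᵀA`:
`⟨A, W⟩ = ∑ₖ ⟨A v_k, W v_k⟩ ≤ ∑ₖ ‖A v_k‖ = ‖A‖_*` whenever `W` has operator norm at most `1`;
for a diagonal `W` this bound is the Schur test. Singular values are invariant under
`A ↦ U A Vᵀ` because `(U A Vᵀ)ᵀ (U A Vᵀ) = V (AᵀA) Vᵀ` has the same characteristic polynomial.
-/

open Function

section Support

variable {ι : Type*} [Fintype ι] {f : ι → ℝ}

theorem sum_le_of_support_subsingleton (h : (support f).Subsingleton) {c : ℝ} (hc : 0 ≤ c)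
    (hf : ∀ i, f i ≤ c) : ∑ i, f i ≤ c := by
  rcases h.eq_empty_or_singleton with h | ⟨i, hi⟩
  · simp [support_eq_empty_iff.mp h, hc]
  · rw [Finset.sum_eq_single i (fun j _ hj => notMem_support.mp (by rw [hi]; exact hj)) (by simp)]
    exact hf i

theorem sum_sq_eq_sq_sum_of_support_subsingleton (h : (support f).Subsingleton) :
    ∑ i, f i ^ 2 = (∑ i, f i) ^ 2 := by
  rcases h.eq_empty_or_singleton with h | ⟨i, hi⟩
  · simp [support_eq_empty_iff.mp h]
  · have hf : ∀ j ∈ Finset.univ, j ≠ i → f j = 0 := fun j _ hj =>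
      notMem_support.mp (by rw [hi]; exact hj)
    rw [Finset.sum_eq_single i (fun j hj hji => by simp [hf j hj hji]) (by simp),
      Finset.sum_eq_single i hf (by simp)]

end Support

theorem dotProduct_mulVec_le_of_sum_abs_le {ι κ : Type*} [Fintype ι] [Fintype κ]
    {G : Matrix ι κ ℝ} {c : ℝ} (hc : 0 ≤ c)
    (hrow : ∀ i, ∑ j, |G i j| ≤ c) (hcol : ∀ j, ∑ i, |G i j| ≤ c)
    {x : ι → ℝ} {y : κ → ℝ} (hx : x ⬝ᵥ x ≤ 1) (hy : y ⬝ᵥ y ≤ 1) :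
    x ⬝ᵥ (G *ᵥ y) ≤ c := by
  have hterm : ∀ i j, x i * (G i j * y j) ≤ |G i j| * x i ^ 2 / 2 + |G i j| * y j ^ 2 / 2 := by
    intro i j
    have hxy : |x i| * |y j| ≤ (x i ^ 2 + y j ^ 2) / 2 := by
      nlinarith [sq_nonneg (|x i| - |y j|), sq_abs (x i), sq_abs (y j)]
    calc x i * (G i j * y j) ≤ |x i * (G i j * y j)| := le_abs_self _
      _ = |G i j| * (|x i| * |y j|) := by simp only [abs_mul]; ring
      _ ≤ |G i j| * ((x i ^ 2 + y j ^ 2) / 2) := by gcongr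
      _ = _ := by ring
  have hx' : ∑ i, x i ^ 2 ≤ 1 := by simpa [dotProduct, sq] using hx
  have hy' : ∑ j, y j ^ 2 ≤ 1 := by simpa [dotProduct, sq] using hy
  calc x ⬝ᵥ (G *ᵥ y) = ∑ i, ∑ j, x i * (G i j * y j) := by
        simp only [dotProduct, mulVec, Finset.mul_sum]
    _ ≤ ∑ i, ∑ j, (|G i j| * x i ^ 2 / 2 + |G i j| * y j ^ 2 / 2) := by
        gcongr with i _ j _; exact hterm i j
    _ = (∑ i, x i ^ 2 * ∑ j, |G i j| + ∑ j, y j ^ 2 * ∑ i, |G i j|) / 2 := by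
        simp only [Finset.sum_add_distrib, Finset.mul_sum, add_div, Finset.sum_div]
        congr 1
        · exact Finset.sum_congr rfl fun _ _ => Finset.sum_congr rfl fun _ _ => by ring
        · rw [Finset.sum_comm]
          exact Finset.sum_congr rfl fun _ _ => Finset.sum_congr rfl fun _ _ => by ring
    _ ≤ (∑ i, x i ^ 2 * c + ∑ j, y j ^ 2 * c) / 2 := by
        gcongr with i _ j _ <;> first | exact hrow i | exact hcol j
    _ ≤ c := by rw [← Finset.sum_mul, ← Finset.sum_mul]; nlinarith

theorem dotProduct_mulVec_le_mul_sqrt {ι κ : Type*} [Fintype ι] [Fintype κ]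
    {W : Matrix ι κ ℝ} {c : ℝ} (hW : ∀ x y, x ⬝ᵥ x ≤ 1 → y ⬝ᵥ y ≤ 1 → x ⬝ᵥ (W *ᵥ y) ≤ c)
    (a : ι → ℝ) {y : κ → ℝ} (hy : y ⬝ᵥ y ≤ 1) : a ⬝ᵥ (W *ᵥ y) ≤ c * √(a ⬝ᵥ a) := by
  by_cases ha : a = 0
  · simp [ha]
  have hpos : 0 < a ⬝ᵥ a := by simpa using dotProduct_star_self_pos_iff.mpr ha
  set s := √(a ⬝ᵥ a)
  have hs : 0 < s := Real.sqrt_pos.mpr hpos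
  have hs2 : s ^ 2 = a ⬝ᵥ a := Real.sq_sqrt hpos.le
  have hunit : s⁻¹ • a ⬝ᵥ s⁻¹ • a = 1 := by
    rw [smul_dotProduct, dotProduct_smul, smul_eq_mul, smul_eq_mul, ← hs2]
    field_simp
  have h := hW _ y hunit.le hy
  rw [smul_dotProduct, smul_eq_mul, inv_mul_le_iff₀ hs] at h
  linarith

section Frobenius

variable {m n : ℕ}

theorem frobInner_eq_sum (A B : Matrix (Fin m) (Fin n) ℝ) :
    frobInner A B = ∑ i, ∑ j, A i j * B i j := by
  simp only [frobInner, trace, diag, mul_apply, transpose_apply]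
  exact Finset.sum_comm

theorem frobSq_add (A B : Matrix (Fin m) (Fin n) ℝ) :
    frobSq (A + B) = frobSq A + 2 * frobInner A B + frobSq B := by
  simp only [frobSq, frobInner_eq_sum, Matrix.add_apply, Finset.mul_sum, ← Finset.sum_add_distrib]
  exact Finset.sum_congr rfl fun _ _ => Finset.sum_congr rfl fun _ _ => by ring

theorem frobSq_pos {A : Matrix (Fin m) (Fin n) ℝ} (hA : A ≠ 0) : 0 < frobSq A := by
  obtain ⟨i, j, hij⟩ : ∃ i j, A i j ≠ 0 := by
    by_contra! h
    exact hA (ext h)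
  exact Finset.sum_pos' (fun _ _ => Finset.sum_nonneg fun _ _ => sq_nonneg _)
    ⟨i, Finset.mem_univ _, Finset.sum_pos' (fun _ _ => sq_nonneg _)
      ⟨j, Finset.mem_univ _, pow_two_pos_of_ne_zero hij⟩⟩

theorem frobInner_mul_left {U : Matrix (Fin m) (Fin m) ℝ} (hU : Uᵀ * U = 1)
    (A B : Matrix (Fin m) (Fin n) ℝ) : frobInner (U * A) (U * B) = frobInner A B := by
  rw [frobInner, transpose_mul, Matrix.mul_assoc, ← Matrix.mul_assoc Uᵀ, hU, Matrix.one_mul,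
    frobInner]

theorem frobInner_mul_right {P : Matrix (Fin n) (Fin n) ℝ} (hP : P * Pᵀ = 1)
    (A B : Matrix (Fin m) (Fin n) ℝ) : frobInner (A * P) (B * P) = frobInner A B := by
  rw [frobInner, frobInner, transpose_mul, trace_mul_comm, Matrix.mul_assoc,
    ← Matrix.mul_assoc P, hP, Matrix.one_mul, trace_mul_comm]

theorem frobInner_mul_mul_transpose {U : Matrix (Fin m) (Fin m) ℝ}
    {V : Matrix (Fin n) (Fin n) ℝ} (hU : Uᵀ * U = 1) (hV : Vᵀ * V = 1)
    (A B : Matrix (Fin m) (Fin n) ℝ) :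
    frobInner (U * A * Vᵀ) (U * B * Vᵀ) = frobInner A B := by
  rw [frobInner_mul_right (by rwa [transpose_transpose]), frobInner_mul_left hU]

theorem frobInner_eq_sum_dotProduct_mulVec {P : Matrix (Fin n) (Fin n) ℝ} (hP : P * Pᵀ = 1)
    (A B : Matrix (Fin m) (Fin n) ℝ) :
    frobInner A B = ∑ k, (A *ᵥ Pᵀ k) ⬝ᵥ (B *ᵥ Pᵀ k) := by
  rw [← frobInner_mul_right hP, frobInner_eq_sum, Finset.sum_comm]
  rfl

end Frobenius

theorem nuclearNorm_eq_sum_sqrt_of_transpose_mul_self_eq_diagonal {m n : ℕ}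
    {A : Matrix (Fin m) (Fin n) ℝ} {d : Fin n → ℝ} (h : Aᵀ * A = diagonal d) :
    nuclearNorm A = ∑ i, √(d i) := by
  have hchar : (Aᴴ * A).charpoly = ∏ i, (Polynomial.X - Polynomial.C (d i)) := by
    rw [conjTranspose_eq_transpose_of_trivial, h, charpoly_diagonal]
  have hroots := (isHermitian_conjTranspose_mul_self A).roots_charpoly_eq_eigenvalues
  rw [hchar, Polynomial.roots_prod _ _
    (Finset.prod_ne_zero_iff.mpr fun i _ => Polynomial.X_sub_C_ne_zero (d i))] at hroots
  simp only [Polynomial.roots_X_sub_C, Multiset.bind_singleton, RCLike.ofReal_real_eq_id,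
    Function.id_comp] at hroots
  have hsqrt (f : Fin n → ℝ) :
      ∑ i, √(f i) = ((Finset.univ.val.map f).map Real.sqrt).sum := by
    rw [Multiset.map_map, Finset.sum_eq_multiset_sum]; rfl
  rw [nuclearNorm, hsqrt, hroots]
  exact hsqrt _

theorem singularValues_mul_mul_transpose {m n : ℕ} {U : Matrix (Fin m) (Fin m) ℝ}
    {V : Matrix (Fin n) (Fin n) ℝ} (hU : Uᵀ * U = 1) (hV : Vᵀ * V = 1)
    (A : Matrix (Fin m) (Fin n) ℝ) : singularValues (U * A * Vᵀ) = singularValues A := by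
  have hcharpoly : ((U * A * Vᵀ)ᴴ * (U * A * Vᵀ)).charpoly = (Aᴴ * A).charpoly := by
    simp only [conjTranspose_eq_transpose_of_trivial, transpose_mul, transpose_transpose]
    rw [show V * (Aᵀ * Uᵀ) * (U * A * Vᵀ) = V * (Aᵀ * A * Vᵀ) by
      simp only [Matrix.mul_assoc]; rw [← Matrix.mul_assoc Uᵀ, hU, Matrix.one_mul],
      charpoly_mul_comm, Matrix.mul_assoc, hV, Matrix.mul_one]
  unfold singularValues
  rw [(Matrix.IsHermitian.eigenvalues_eq_eigenvalues_iff _ _).mpr hcharpoly]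

theorem nuclearNorm_mul_mul_transpose {m n : ℕ} {U : Matrix (Fin m) (Fin m) ℝ}
    {V : Matrix (Fin n) (Fin n) ℝ} (hU : Uᵀ * U = 1) (hV : Vᵀ * V = 1)
    (A : Matrix (Fin m) (Fin n) ℝ) : nuclearNorm (U * A * Vᵀ) = nuclearNorm A := by
  simp only [nuclearNorm, singularValues_mul_mul_transpose hU hV]

theorem singularValues_eq_sqrt_dotProduct_mulVec {m n : ℕ} (A : Matrix (Fin m) (Fin n) ℝ)
    (k : Fin n) :
    singularValues A k = √((A *ᵥ (isHermitian_conjTranspose_mul_self A).eigenvectorBasis k) ⬝ᵥ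
      (A *ᵥ (isHermitian_conjTranspose_mul_self A).eigenvectorBasis k)) := by
  rw [singularValues, (isHermitian_conjTranspose_mul_self A).eigenvalues_eq, ← mulVec_mulVec,
    dotProduct_mulVec, ← star_mulVec]
  simp

theorem frobInner_le_mul_nuclearNorm {m n : ℕ} (A : Matrix (Fin m) (Fin n) ℝ)
    {W : Matrix (Fin m) (Fin n) ℝ} {c : ℝ}
    (hW : ∀ x y, x ⬝ᵥ x ≤ 1 → y ⬝ᵥ y ≤ 1 → x ⬝ᵥ (W *ᵥ y) ≤ c) :
    frobInner A W ≤ c * nuclearNorm A := by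
  set hH := isHermitian_conjTranspose_mul_self A
  set P : Matrix (Fin n) (Fin n) ℝ := ↑hH.eigenvectorUnitary
  have hP : P * Pᵀ = 1 := by
    simpa [P, star_eq_conjTranspose] using mem_unitaryGroup_iff.mp hH.eigenvectorUnitary.2
  have hP' : Pᵀ * P = 1 := mul_eq_one_comm.mp hP
  rw [frobInner_eq_sum_dotProduct_mulVec hP, nuclearNorm, Finset.mul_sum]
  gcongr with k
  have hk : Pᵀ k ⬝ᵥ Pᵀ k ≤ 1 := (congrFun (congrFun hP' k) k).trans_le (by simp)
  rw [singularValues_eq_sqrt_dotProduct_mulVec]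
  exact dotProduct_mulVec_le_mul_sqrt hW _ hk

def IsRectDiag {m n : ℕ} (G : Matrix (Fin m) (Fin n) ℝ) : Prop :=
  ∀ (i : Fin m) (j : Fin n), (i : ℕ) ≠ (j : ℕ) → G i j = 0

namespace IsRectDiag

variable {m n : ℕ} {G : Matrix (Fin m) (Fin n) ℝ}

theorem val_eq_of_ne_zero (hG : IsRectDiag G) {i : Fin m} {j : Fin n} (h : G i j ≠ 0) :
    (i : ℕ) = j :=
  not_imp_comm.mp (hG i j) h

theorem support_abs_row_subsingleton (hG : IsRectDiag G) (i : Fin m) :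
    (support fun j => |G i j|).Subsingleton := fun _ hj _ hk =>
  Fin.ext ((hG.val_eq_of_ne_zero (abs_ne_zero.mp hj)).symm.trans
    (hG.val_eq_of_ne_zero (abs_ne_zero.mp hk)))

theorem support_abs_col_subsingleton (hG : IsRectDiag G) (j : Fin n) :
    (support fun i => |G i j|).Subsingleton := fun _ hi _ hk =>
  Fin.ext ((hG.val_eq_of_ne_zero (abs_ne_zero.mp hi)).trans
    (hG.val_eq_of_ne_zero (abs_ne_zero.mp hk)).symm)

theorem sub {G' : Matrix (Fin m) (Fin n) ℝ} (hG : IsRectDiag G) (hG' : IsRectDiag G') :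
    IsRectDiag (G - G') := fun i j hij => by simp [hG i j hij, hG' i j hij]

theorem transpose_mul_self (hG : IsRectDiag G) :
    Gᵀ * G = diagonal fun j => ∑ i, G i j ^ 2 := by
  ext j k
  simp only [mul_apply, transpose_apply, diagonal_apply]
  split_ifs with hjk
  · simp [hjk, sq]
  · refine Finset.sum_eq_zero fun i _ => ?_
    by_contra h
    exact hjk (Fin.ext ((hG.val_eq_of_ne_zero (left_ne_zero_of_mul h)).symm.trans
      (hG.val_eq_of_ne_zero (right_ne_zero_of_mul h))))

theorem nuclearNorm_eq (hG : IsRectDiag G) : nuclearNorm G = ∑ i, ∑ j, |G i j| := by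
  rw [nuclearNorm_eq_sum_sqrt_of_transpose_mul_self_eq_diagonal hG.transpose_mul_self,
    Finset.sum_comm]
  refine Finset.sum_congr rfl fun j _ => ?_
  rw [← Real.sqrt_sq (Finset.sum_nonneg fun i _ => abs_nonneg (G i j)),
    ← sum_sq_eq_sq_sum_of_support_subsingleton (hG.support_abs_col_subsingleton j)]
  simp only [sq_abs]

theorem frobInner_le_mul_nuclearNorm (hG : IsRectDiag G) {c : ℝ} (hc : 0 ≤ c)
    (hGc : ∀ i j, |G i j| ≤ c) (A : Matrix (Fin m) (Fin n) ℝ) :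
    frobInner A G ≤ c * nuclearNorm A :=
  _root_.frobInner_le_mul_nuclearNorm A fun _ _ =>
    dotProduct_mulVec_le_of_sum_abs_le hc
      (fun i => sum_le_of_support_subsingleton (hG.support_abs_row_subsingleton i) hc (hGc i))
      (fun j => sum_le_of_support_subsingleton (hG.support_abs_col_subsingleton j) hc
        (hGc · j))

end IsRectDiag

theorem frobInner_mul_mul_transpose_le {m n : ℕ} {U : Matrix (Fin m) (Fin m) ℝ}
    {V : Matrix (Fin n) (Fin n) ℝ} (hU : Uᵀ * U = 1) (hV : Vᵀ * V = 1)
    {G : Matrix (Fin m) (Fin n) ℝ} (hG : IsRectDiag G) {c : ℝ} (hc : 0 ≤ c)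
    (hGc : ∀ i j, |G i j| ≤ c) (A : Matrix (Fin m) (Fin n) ℝ) :
    frobInner A (U * G * Vᵀ) ≤ c * nuclearNorm A := by
  have hA : A = U * (Uᵀ * A * V) * Vᵀ := by
    simp only [← Matrix.mul_assoc, mul_eq_one_comm.mp hU, Matrix.one_mul]
    rw [Matrix.mul_assoc, mul_eq_one_comm.mp hV, Matrix.mul_one]
  calc frobInner A (U * G * Vᵀ) = frobInner (Uᵀ * A * V) G := by
        conv_lhs => rw [hA]
        exact frobInner_mul_mul_transpose hU hV _ _
    _ ≤ c * nuclearNorm (Uᵀ * A * V) := hG.frobInner_le_mul_nuclearNorm hc hGc _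
    _ = c * nuclearNorm A := by rw [← nuclearNorm_mul_mul_transpose hU hV, ← hA]

theorem half_frobSq_sub_add_lt_of_frobInner_le {m n : ℕ}
    {f : Matrix (Fin m) (Fin n) ℝ → ℝ} {X Zs Z : Matrix (Fin m) (Fin n) ℝ}
    (hZs : f Zs ≤ frobInner Zs (X - Zs)) (hZ : frobInner Z (X - Zs) ≤ f Z) (hne : Z ≠ Zs) :
    1 / 2 * frobSq (Zs - X) + f Zs < 1 / 2 * frobSq (Z - X) + f Z := by
  have hsplit := frobSq_add (Z - Zs) (Zs - X)
  rw [sub_add_sub_cancel] at hsplit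
  have hcross : frobInner (Z - Zs) (Zs - X) = frobInner Zs (X - Zs) - frobInner Z (X - Zs) := by
    simp only [frobInner_eq_sum, Matrix.sub_apply, ← Finset.sum_sub_distrib]
    exact Finset.sum_congr rfl fun _ _ => Finset.sum_congr rfl fun _ _ => by ring
  linarith [frobSq_pos (sub_ne_zero.mpr hne)]

theorem max_sub_mul_sub_max (s t : ℝ) :
    max (s - t) 0 * (s - max (s - t) 0) = t * max (s - t) 0 := by
  rcases le_total s t with h | h
  · simp [max_eq_right (sub_nonpos.mpr h)]
  · rw [max_eq_left (sub_nonneg.mpr h)]; ring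

theorem abs_sub_max_sub_le {s t : ℝ} (hs : 0 ≤ s) (ht : 0 ≤ t) : |s - max (s - t) 0| ≤ t := by
  rcases le_total s t with h | h
  · rwa [max_eq_right (sub_nonpos.mpr h), sub_zero, abs_of_nonneg hs]
  · rw [max_eq_left (sub_nonneg.mpr h), sub_sub_cancel, abs_of_nonneg ht]

/-- The proximal operator of `λ‖·‖_*` at `X` with full SVD
`X = U Σ Vᵀ` is singular value soft-thresholding: the unique minimizer of
`(1/2)‖Z − X‖_F² + λ‖Z‖_*` is `U max(Σ − λ, 0) Vᵀ`. -/
theorem prox_nuclearNorm_eq_svt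
    {m n : ℕ} (X : Matrix (Fin m) (Fin n) ℝ) (lam : ℝ) (hlam : 0 < lam)
    (U : Matrix (Fin m) (Fin m) ℝ) (Sd : Matrix (Fin m) (Fin n) ℝ)
    (V : Matrix (Fin n) (Fin n) ℝ)
    (hU : Uᵀ * U = 1) (hV : Vᵀ * V = 1)
    (hSdiag : ∀ (i : Fin m) (j : Fin n), (i : ℕ) ≠ (j : ℕ) → Sd i j = 0)
    (hSnonneg : ∀ (i : Fin m) (j : Fin n), 0 ≤ Sd i j)
    (hX : X = U * Sd * Vᵀ) :
    ∀ Z : Matrix (Fin m) (Fin n) ℝ,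
      Z ≠ U * (Matrix.of fun i j => max (Sd i j - lam) 0) * Vᵀ →
      (1 / 2) * frobSq (U * (Matrix.of fun i j => max (Sd i j - lam) 0) * Vᵀ - X)
          + lam * nuclearNorm (U * (Matrix.of fun i j => max (Sd i j - lam) 0) * Vᵀ)
        < (1 / 2) * frobSq (Z - X) + lam * nuclearNorm Z := by
  intro Z hZ
  set D : Matrix (Fin m) (Fin n) ℝ := Matrix.of fun i j => max (Sd i j - lam) 0
  have hD : IsRectDiag D := fun i j hij => by simp [D, hSdiag i j hij, hlam.le]
  have hXD : X - U * D * Vᵀ = U * (Sd - D) * Vᵀ := by rw [hX, Matrix.mul_sub, Matrix.sub_mul]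
  refine half_frobSq_sub_add_lt_of_frobInner_le (f := (lam * nuclearNorm ·)) ?_ ?_ hZ
  · rw [hXD, frobInner_mul_mul_transpose hU hV, nuclearNorm_mul_mul_transpose hU hV,
      hD.nuclearNorm_eq, frobInner_eq_sum, Finset.mul_sum]
    refine (Finset.sum_congr rfl fun i _ => ?_).le
    rw [Finset.mul_sum]
    refine Finset.sum_congr rfl fun j _ => ?_
    rw [abs_of_nonneg (le_max_right _ _)]
    exact (max_sub_mul_sub_max (Sd i j) lam).symm
  · rw [hXD]
    exact frobInner_mul_mul_transpose_le hU hV (IsRectDiag.sub hSdiag hD) hlam.le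
      (fun i j => abs_sub_max_sub_le (hSnonneg i j) hlam.le) Z
end
end
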